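/- Let ν be a finite signed (if 𝔽 = ℝ) or complex (if 𝔽 = ℂ) Radon measure on K × B_{E*} satisfying ‖T*ν‖ = ‖ν‖. Then ν is carried by K × S_{E*}; that is, |ν|( K × (B_{E*} \ S_{E*}) ) = 0. -/

import Mathlib

open MeasureTheory
open scoped ENNReal

noncomputable section

/-- The closed unit ball of the dual of `E`, equipped with the weak* topology. -/
abbrev DualBall (𝕜 E : Type*) [RCLike 𝕜] [NormedAddCommGroup E] [NormedSpace 𝕜 E] :=
  {φ : WeakDual 𝕜 E // ‖WeakDual.toStrongDual φ‖ ≤ 1}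

/-- The Borel σ-algebra on `K × B_{E*}`. -/
instance (priority := 1100) prodBallBorelMeasurableSpace (K : Type*) [TopologicalSpace K]
    (𝕜 E : Type*) [RCLike 𝕜] [NormedAddCommGroup E] [NormedSpace 𝕜 E] :
    MeasurableSpace (K × DualBall 𝕜 E) := borel _

instance (K : Type*) [TopologicalSpace K]
    (𝕜 E : Type*) [RCLike 𝕜] [NormedAddCommGroup E] [NormedSpace 𝕜 E] :
    BorelSpace (K × DualBall 𝕜 E) := ⟨rfl⟩

/-!
For `‖f‖ ≤ 1` and `|ρ| = 1`, `‖∫ x*(f t) ρ d|ν|‖ ≤ ∫ ‖x*‖ d|ν| ≤ ‖ν‖`, so `‖T*ν‖ = ‖ν‖` forces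
`∫ ‖x*‖ d|ν| = ∫ 1 d|ν|`. As `‖x*‖ ≤ 1` on the ball, `‖x*‖ = 1` holds `|ν|`-almost everywhere;
Borel measurability of `(t, x*) ↦ ‖x*‖` comes from weak*-closedness of norm balls.
-/

theorem WeakDual.lowerSemicontinuous_norm_toStrongDual {𝕜 E : Type*} [NontriviallyNormedField 𝕜]
    [SeminormedAddCommGroup E] [NormedSpace 𝕜 E] :
    LowerSemicontinuous fun φ : WeakDual 𝕜 E => ‖toStrongDual φ‖ :=
  lowerSemicontinuous_iff_isClosed_preimage.2 fun r => by
    simpa [Set.preimage, Metric.closedBall] using isClosed_closedBall (0 : StrongDual 𝕜 E) r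

section DualBall

variable {K : Type*} [TopologicalSpace K] {𝕜 E : Type*} [RCLike 𝕜] [NormedAddCommGroup E]
  [NormedSpace 𝕜 E]

theorem measurable_norm_dualBall :
    Measurable fun p : K × DualBall 𝕜 E => ‖WeakDual.toStrongDual p.2.1‖ :=
  (WeakDual.lowerSemicontinuous_norm_toStrongDual.comp
    (continuous_subtype_val.comp continuous_snd)).measurable

theorem norm_integral_eval_mul_le_integral_norm [CompactSpace K] (τ : Measure (K × DualBall 𝕜 E))
    {ρ : K × DualBall 𝕜 E → 𝕜} (hρ : ∀ p, ‖ρ p‖ ≤ 1)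
    (hint : Integrable (fun p : K × DualBall 𝕜 E => ‖WeakDual.toStrongDual p.2.1‖) τ)
    {f : C(K, E)} (hf : ‖f‖ ≤ 1) :
    ‖∫ p, p.2.1 (f p.1) * ρ p ∂τ‖ ≤ ∫ p, ‖WeakDual.toStrongDual p.2.1‖ ∂τ := by
  refine norm_integral_le_of_norm_le hint (ae_of_all _ fun p => ?_)
  calc ‖p.2.1 (f p.1) * ρ p‖ ≤ ‖WeakDual.toStrongDual p.2.1‖ * ‖f p.1‖ * 1 := by
        rw [norm_mul]
        gcongr
        exacts [(WeakDual.toStrongDual p.2.1).le_opNorm _, hρ p]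
    _ ≤ ‖WeakDual.toStrongDual p.2.1‖ := by
        rw [mul_one]
        exact mul_le_of_le_one_right (norm_nonneg _) ((f.norm_coe_le_norm _).trans hf)

end DualBall

theorem carried_by_sphere_of_norm_eq_general
    (K : Type*) [TopologicalSpace K] [CompactSpace K]
    (𝕜 E : Type*) [RCLike 𝕜] [NormedAddCommGroup E] [NormedSpace 𝕜 E]
    (τ : Measure (K × DualBall 𝕜 E)) [IsFiniteMeasure τ]
    (ρ : K × DualBall 𝕜 E → 𝕜) (hρone : ∀ p, ‖ρ p‖ = 1)
    (hnorm : sSup {r : ℝ | ∃ f : C(K, E), ‖f‖ ≤ 1 ∧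
        r = ‖∫ p, (p.2.1 (f p.1)) * ρ p ∂τ‖} = (τ Set.univ).toReal) :
    τ {p : K × DualBall 𝕜 E | ‖WeakDual.toStrongDual p.2.1‖ < 1} = 0 := by
  set g := fun p : K × DualBall 𝕜 E => ‖WeakDual.toStrongDual p.2.1‖
  have hg_le : ∀ p, g p ≤ 1 := fun p => p.2.2
  have hg_int : Integrable g τ :=
    .of_bound measurable_norm_dualBall.aestronglyMeasurable 1
      (ae_of_all _ fun p => (abs_of_nonneg (norm_nonneg _)).trans_le (hg_le p))
  have h_integral : ∫ p, g p ∂τ = ∫ _, (1 : ℝ) ∂τ := by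
    refine le_antisymm (integral_mono hg_int (integrable_const 1) hg_le) ?_
    rw [integral_const, smul_eq_mul, mul_one, Measure.real, ← hnorm]
    refine Real.sSup_le ?_ (integral_nonneg fun _ => norm_nonneg _)
    rintro _ ⟨f, hf, rfl⟩
    exact norm_integral_eval_mul_le_integral_norm τ (fun p => (hρone p).le) hg_int hf
  have hg_ae : g =ᵐ[τ] fun _ => 1 :=
    (integral_eq_iff_of_ae_le hg_int (integrable_const 1) (ae_of_all _ hg_le)).1 h_integral
  exact measure_mono_null (fun p hp => hp.ne) (ae_iff.1 hg_ae)

/-- A finite signed/complex Radon measure `ν` on `K × B_{E*}` (represented by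
its total variation `τ = |ν|` and a Borel density `ρ` of modulus one, so that
`∫ g dν = ∫ g·ρ dτ`) satisfying `‖T*ν‖ = ‖ν‖` is carried by `K × S_{E*}`. -/
theorem carried_by_sphere_of_norm_eq
    (K : Type*) [TopologicalSpace K] [CompactSpace K] [T2Space K]
    [MeasurableSpace K] [BorelSpace K]
    (𝕜 E : Type*) [RCLike 𝕜] [NormedAddCommGroup E] [NormedSpace 𝕜 E] [CompleteSpace E]
    (τ : Measure (K × DualBall 𝕜 E)) [IsFiniteMeasure τ] [τ.Regular]
    (ρ : K × DualBall 𝕜 E → 𝕜) (hρmeas : Measurable ρ) (hρone : ∀ p, ‖ρ p‖ = 1)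
    (hnorm : sSup {r : ℝ | ∃ f : C(K, E), ‖f‖ ≤ 1 ∧
        r = ‖∫ p, (p.2.1 (f p.1)) * ρ p ∂τ‖} = (τ Set.univ).toReal) :
    τ {p : K × DualBall 𝕜 E | ‖WeakDual.toStrongDual p.2.1‖ < 1} = 0 :=
  carried_by_sphere_of_norm_eq_general K 𝕜 E τ ρ hρone hnorm
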